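/- arXiv:2202.02150 — 3 statements merged into one kernel-verified Lean document; each statement's English description precedes it below -/
import Mathlib

section
/- Fix m ≥ 2, d ≥ 1, ρ_γ > 0, a nonzero vector u ∈ ℝ^d, and β ∈ ℝ^d. For each q ≥ 1, let Σ^{(q)} ∈ ℝ^{m×m} be symmetric positive semidefinite with tr(Σ^{(q)})/(m q) → 0 as q → ∞, let v^{(q)} be a multivariate Gaussian random vector on ℝ^m with mean 0 and covariance (ρ_γ²/q) Σ^{(q)}, and set β̂_j^{(q)} = β + v_j^{(q)} u. Then, as q → ∞: (i) m^{-1} ∑_{j=1}^m β̂_j^{(q)} converges in probability to β; and (ii) if β ≠ 0, the stability statistic 𝒱(β̂_1^{(q)},…,β̂_m^{(q)}) converges in probability to 0. -/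
open MeasureTheory Matrix Filter

/-- Cramér–Wold characterization of the multivariate Gaussian law. -/
def IsGaussianVec {n : ℕ} (μ : Measure (Fin n → ℝ)) (mean : Fin n → ℝ)
    (cov : Matrix (Fin n) (Fin n) ℝ) : Prop :=
  ∀ u : Fin n → ℝ,
    μ.map (fun x => u ⬝ᵥ x) =
      ProbabilityTheory.gaussianReal (u ⬝ᵥ mean) (u ⬝ᵥ (cov *ᵥ u)).toNNReal

/-- The stability statistic `𝒱(v_1, …, v_m) = 1 - ‖m⁻¹ ∑ v_j‖² / (m⁻¹ ∑ ‖v_j‖²)`. -/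
noncomputable def Vstat {m d : ℕ} (v : Fin m → Fin d → ℝ) : ℝ :=
  1 - (∑ i, ((m : ℝ)⁻¹ * ∑ j, v j i) ^ 2) / ((m : ℝ)⁻¹ * ∑ j, ∑ i, v j i ^ 2)

/-! Each coordinate `v_j⁽q⁾` is a centred Gaussian with variance
`ρ_γ² Σ⁽q⁾_jj / q ≤ ρ_γ² tr Σ⁽q⁾ / q → 0`, so by Chebyshev's inequality `v⁽q⁾ → 0` in probability.
The error of the averaged coefficients and the statistic `𝒱(β̂⁽q⁾)` are functions of `v⁽q⁾`
that are continuous at `v = 0` and vanish there (for `𝒱` because its denominator is then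
`‖β‖² ≠ 0`), so they converge to `0` in probability as well. -/

open ProbabilityTheory Topology

section ConvergenceInProbability

variable {κ ι E F : Type*} {l : Filter κ}

theorem tendsto_measure_dist_ge_of_continuousAt [PseudoMetricSpace E] [MeasurableSpace E]
    [PseudoMetricSpace F] {μ : κ → Measure E} {a : E}
    (hμ : ∀ δ > 0, Tendsto (fun k => μ k {x | δ ≤ dist x a}) l (𝓝 0))
    {g : E → F} (hg : ContinuousAt g a) {ε : ℝ} (hε : 0 < ε) :
    Tendsto (fun k => μ k {x | ε ≤ dist (g x) (g a)}) l (𝓝 0) := by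
  obtain ⟨δ, hδ, hgδ⟩ := Metric.continuousAt_iff.mp hg ε hε
  refine tendsto_of_tendsto_of_tendsto_of_le_of_le tendsto_const_nhds (hμ δ hδ)
    (fun _ => zero_le) fun k => measure_mono fun x hx => ?_
  exact not_lt.mp fun hxa => (hgδ hxa).not_ge hx

theorem tendsto_measure_dist_ge_pi [Fintype ι] [PseudoMetricSpace E] [MeasurableSpace E]
    {μ : κ → Measure (ι → E)} {a : ι → E}
    (hμ : ∀ j, ∀ δ > 0, Tendsto (fun k => μ k {x | δ ≤ dist (x j) (a j)}) l (𝓝 0)) :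
    ∀ δ > 0, Tendsto (fun k => μ k {x | δ ≤ dist x a}) l (𝓝 0) := by
  intro δ hδ
  have hsum := tendsto_finsetSum Finset.univ fun j _ => hμ j δ hδ
  rw [Finset.sum_const_zero] at hsum
  refine tendsto_of_tendsto_of_tendsto_of_le_of_le tendsto_const_nhds hsum
    (fun _ => zero_le) fun k => ?_
  calc μ k {x | δ ≤ dist x a} ≤ μ k (⋃ j, {x | δ ≤ dist (x j) (a j)}) := by
        refine measure_mono fun x hx => ?_
        by_contra hx'
        simp only [Set.mem_iUnion, Set.mem_ofPred_eq, not_exists, not_le] at hx'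
        exact hx.not_gt ((dist_pi_lt_iff hδ).mpr hx')
    _ ≤ ∑ j, μ k {x | δ ≤ dist (x j) (a j)} := measure_iUnion_fintype_le _ _

end ConvergenceInProbability

theorem Matrix.PosSemidef.diag_le_trace {n R : Type*} [Fintype n] [Ring R] [PartialOrder R]
    [StarRing R] [IsOrderedAddMonoid R] {A : Matrix n n R} (hA : A.PosSemidef) (j : n) :
    A j j ≤ A.trace :=
  Finset.single_le_sum (f := A.diag) (fun _ _ => hA.diag_nonneg) (Finset.mem_univ j)

theorem tendsto_diag_div_of_tendsto_trace_div {m : ℕ} {S : ℕ → Matrix (Fin m) (Fin m) ℝ}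
    (hS : ∀ᶠ q in atTop, (S q).PosSemidef)
    (htr : Tendsto (fun q : ℕ => (S q).trace / (m * q)) atTop (𝓝 0)) (j : Fin m) :
    Tendsto (fun q : ℕ => S q j j / q) atTop (𝓝 0) := by
  have hm : (m : ℝ) ≠ 0 := by exact_mod_cast j.pos.ne'
  have hbound := htr.const_mul (m : ℝ)
  rw [mul_zero] at hbound
  refine tendsto_of_tendsto_of_tendsto_of_le_of_le' tendsto_const_nhds hbound ?_ ?_
  · filter_upwards [hS] with q hq using div_nonneg hq.diag_nonneg q.cast_nonneg
  · filter_upwards [hS] with q hq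
    rw [mul_div_assoc', mul_div_mul_left _ _ hm]
    exact div_le_div_of_nonneg_right (hq.diag_le_trace j) q.cast_nonneg

namespace IsGaussianVec

variable {n : ℕ} {μ : Measure (Fin n → ℝ)} {mean : Fin n → ℝ} {cov : Matrix (Fin n) (Fin n) ℝ}

theorem map_eval (h : IsGaussianVec μ mean cov) (j : Fin n) :
    μ.map (fun x => x j) = gaussianReal (mean j) (cov j j).toNNReal := by
  simpa [single_dotProduct, mulVec_single] using h (Pi.single j 1)

theorem measure_dist_eval_ge_le (h : IsGaussianVec μ mean cov) (j : Fin n) {δ : ℝ}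
    (hδ : 0 < δ) : μ {x | δ ≤ dist (x j) (mean j)} ≤ ENNReal.ofReal (cov j j / δ ^ 2) := by
  have hcheb := meas_ge_le_variance_div_sq (memLp_id_gaussianReal 2) hδ
    (μ := gaussianReal (mean j) (cov j j).toNNReal)
  simp only [id, variance_id_gaussianReal, integral_id_gaussianReal] at hcheb
  rw [← h.map_eval j, Measure.map_apply (measurable_pi_apply j)
      (measurableSet_le measurable_const (measurable_id.sub_const (mean j)).abs)] at hcheb
  calc μ {x | δ ≤ dist (x j) (mean j)} ≤ ENNReal.ofReal ((cov j j).toNNReal / δ ^ 2) := hcheb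
    _ = ENNReal.ofReal (cov j j / δ ^ 2) := by
      rw [ENNReal.ofReal_div_of_pos (by positivity), ENNReal.ofReal_div_of_pos (by positivity),
        ENNReal.ofReal_coe_nnreal]
      rfl

theorem tendsto_measure_dist_eval_ge {κ : Type*} {l : Filter κ} {μ : κ → Measure (Fin n → ℝ)}
    {cov : κ → Matrix (Fin n) (Fin n) ℝ} (h : ∀ᶠ k in l, IsGaussianVec (μ k) mean (cov k))
    (hcov : ∀ j, Tendsto (fun k => cov k j j) l (𝓝 0)) :
    ∀ j, ∀ δ > 0, Tendsto (fun k => μ k {x | δ ≤ dist (x j) (mean j)}) l (𝓝 0) := by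
  intro j δ hδ
  have hbound := ENNReal.tendsto_ofReal ((hcov j).div_const (δ ^ 2))
  rw [zero_div, ENNReal.ofReal_zero] at hbound
  refine tendsto_of_tendsto_of_tendsto_of_le_of_le' tendsto_const_nhds hbound
    (.of_forall fun _ => zero_le) ?_
  filter_upwards [h] with k hk using hk.measure_dist_eval_ge_le j hδ

end IsGaussianVec

section Vstat

variable {m d : ℕ}

theorem continuousAt_Vstat {v : Fin m → Fin d → ℝ} (hv : v ≠ 0) : ContinuousAt Vstat v := by
  obtain ⟨j, hj⟩ := Function.ne_iff.mp hv
  obtain ⟨i, hi⟩ := Function.ne_iff.mp hj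
  have hm : (m : ℝ)⁻¹ ≠ 0 := inv_ne_zero (by exact_mod_cast j.pos.ne')
  have hsq : ∑ j, ∑ i, v j i ^ 2 ≠ 0 := by
    exact (Finset.sum_pos' (fun j _ => Finset.sum_nonneg fun i _ => sq_nonneg _)
      ⟨j, Finset.mem_univ j, Finset.sum_pos' (fun i _ => sq_nonneg _)
        ⟨i, Finset.mem_univ i, sq_pos_of_ne_zero hi⟩⟩).ne'
  unfold Vstat
  fun_prop (disch := exact mul_ne_zero hm hsq)

theorem Vstat_const (hm : m ≠ 0) {b : Fin d → ℝ} (hb : b ≠ 0) :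
    Vstat (fun _ : Fin m => b) = 0 := by
  have hsq : ∑ i, b i ^ 2 ≠ 0 := by
    obtain ⟨i, hi⟩ := Function.ne_iff.mp hb
    exact (Finset.sum_pos' (fun i _ => sq_nonneg _)
      ⟨i, Finset.mem_univ i, sq_pos_of_ne_zero hi⟩).ne'
  have hm' : (m : ℝ) ≠ 0 := by exact_mod_cast hm
  simp [Vstat, hm', hsq]

end Vstat

theorem stmt_4_general (m d : ℕ) (hm : 2 ≤ m)
    (ργ : ℝ) (u : Fin d → ℝ) (β : Fin d → ℝ)
    (Sgm : ℕ → Matrix (Fin m) (Fin m) ℝ) (hpsd : ∀ q, 1 ≤ q → (Sgm q).PosSemidef)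
    (htr : Tendsto (fun q : ℕ => (Sgm q).trace / (m * q)) atTop (nhds 0))
    (μ : ℕ → Measure (Fin m → ℝ))
    (hgauss : ∀ q, 1 ≤ q → IsGaussianVec (μ q) 0 ((ργ ^ 2 / q) • Sgm q)) :
    (∀ ε > (0 : ℝ), Tendsto (fun q : ℕ =>
        μ q {x | ε ≤ Real.sqrt (∑ i,
          ((m : ℝ)⁻¹ * (∑ j, (β i + x j * u i)) - β i) ^ 2)}) atTop (nhds 0))
    ∧ (β ≠ 0 → ∀ ε > (0 : ℝ), Tendsto (fun q : ℕ =>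
        μ q {x | ε ≤ |Vstat (fun j i => β i + x j * u i)|}) atTop (nhds 0)) := by
  have hm0 : m ≠ 0 := by omega
  have hcov (j : Fin m) : Tendsto (fun q : ℕ => ((ργ ^ 2 / q) • Sgm q) j j) atTop (𝓝 0) := by
    simpa [div_mul_eq_mul_div, mul_div_assoc] using
      (tendsto_diag_div_of_tendsto_trace_div (eventually_atTop.2 ⟨1, hpsd⟩) htr j).const_mul
        (ργ ^ 2)
  have hconc : ∀ δ > 0, Tendsto (fun q => μ q {x | δ ≤ dist x 0}) atTop (𝓝 0) :=
    tendsto_measure_dist_ge_pi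
      (IsGaussianVec.tendsto_measure_dist_eval_ge (eventually_atTop.2 ⟨1, hgauss⟩) hcov)
  refine ⟨fun ε hε => ?_, fun hβ ε hε => ?_⟩
  · have hcont : Continuous fun x : Fin m → ℝ =>
        Real.sqrt (∑ i, ((m : ℝ)⁻¹ * (∑ j, (β i + x j * u i)) - β i) ^ 2) := by fun_prop
    simpa [Real.dist_eq, hm0, abs_of_nonneg, Real.sqrt_nonneg] using
      tendsto_measure_dist_ge_of_continuousAt hconc hcont.continuousAt hε
  · have hcont : ContinuousAt (fun x : Fin m → ℝ => Vstat (fun j i => β i + x j * u i)) 0 :=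
      (continuousAt_Vstat (v := fun _ => β) (Function.ne_iff.mpr ⟨⟨0, by omega⟩, hβ⟩)).comp_of_eq
        (by fun_prop : Continuous fun (x : Fin m → ℝ) j i => β i + x j * u i).continuousAt
        (by ext; simp)
    simpa [Real.dist_eq, Vstat_const hm0 hβ] using
      tendsto_measure_dist_ge_of_continuousAt hconc hcont hε

/-- with `β̂_j⁽q⁾ = β + v_j⁽q⁾ u`, `v⁽q⁾ ~ N(0, (ρ_γ²/q) Σ⁽q⁾)` and
`tr(Σ⁽q⁾)/(mq) → 0`: (i) `m⁻¹ ∑_j β̂_j⁽q⁾ → β` in probability, and (ii) if `β ≠ 0`, the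
stability statistic `𝒱(β̂₁⁽q⁾, …, β̂_m⁽q⁾) → 0` in probability, as `q → ∞`. -/
theorem stmt_4 (m d : ℕ) (hm : 2 ≤ m) (hd : 1 ≤ d)
    (ργ : ℝ) (hργ : 0 < ργ) (u : Fin d → ℝ) (hu : u ≠ 0) (β : Fin d → ℝ)
    (Sgm : ℕ → Matrix (Fin m) (Fin m) ℝ) (hpsd : ∀ q, 1 ≤ q → (Sgm q).PosSemidef)
    (htr : Tendsto (fun q : ℕ => (Sgm q).trace / (m * q)) atTop (nhds 0))
    (μ : ℕ → Measure (Fin m → ℝ)) (hprob : ∀ q, IsProbabilityMeasure (μ q))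
    (hgauss : ∀ q, 1 ≤ q → IsGaussianVec (μ q) 0 ((ργ ^ 2 / q) • Sgm q)) :
    (∀ ε > (0 : ℝ), Tendsto (fun q : ℕ =>
        μ q {x | ε ≤ Real.sqrt (∑ i,
          ((m : ℝ)⁻¹ * (∑ j, (β i + x j * u i)) - β i) ^ 2)}) atTop (nhds 0))
    ∧ (β ≠ 0 → ∀ ε > (0 : ℝ), Tendsto (fun q : ℕ =>
        μ q {x | ε ≤ |Vstat (fun j i => β i + x j * u i)|}) atTop (nhds 0)) :=
  stmt_4_general m d hm ργ u β Sgm hpsd htr μ hgauss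
end

section
/- Fix m ≥ 2, d ≥ 1, ρ_γ > 0, K > 0, and β ∈ ℝ^d with β ≠ 0. For each q ≥ 1, let γ^{(q)} be a spherically symmetric random vector on ℝ^q with E‖γ^{(q)}‖⁴ ≤ K ρ_γ⁴ / q², and let C^{(q)}(S_1),…,C^{(q)}(S_m) ∈ ℝ^{d×q} be matrices satisfying (1/(m q)) ∑_{j=1}^m tr(C^{(q)}(S_j)^⊤ C^{(q)}(S_j)) → 0 as q → ∞. Set β̂^{(q)}(S_j) = β + C^{(q)}(S_j) γ^{(q)}. Then the stability statistic 𝒱(β̂^{(q)}(S_1),…,β̂^{(q)}(S_m)) converges in probability to 0 as q → ∞. -/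
open MeasureTheory Matrix Filter

/-- A random vector (given by its law `μ` on `ℝ^q`) is spherically symmetric if for every
unit vector `e`, the law of `e⊤ν` coincides with the law of each coordinate `ν_i`. -/
def SphericallySymmetric {q : ℕ} (μ : Measure (Fin q → ℝ)) : Prop :=
  ∀ e : Fin q → ℝ, (∑ i, e i ^ 2) = 1 →
    ∀ i : Fin q, μ.map (fun x => e ⬝ᵥ x) = μ.map (fun x => x i)

/-!
Deterministically, `|𝒱(β + w_1, …, β + w_m)| ≤ 2T / ‖β‖²` as soon as the mean squared
perturbation `T = m⁻¹ ∑ⱼ ‖w_j‖²` is at most `‖β‖² / 16`. So for `w_j = C⁽q⁾(S_j) γ⁽q⁾`, the event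
`|𝒱| ≥ ε` forces `T_q` above a fixed threshold `δ > 0`. Spherical symmetry gives `E⟪c, γ⟫² = ‖c‖² E‖γ‖² / q`, hence
`E T_q = (mq)⁻¹ ∑ⱼ tr(CⱼᵀCⱼ) · E‖γ‖²`, and `E‖γ‖² ≤ √(E‖γ‖⁴) ≤ √K ρ_γ² / q`. Markov's inequality
then bounds `P(|𝒱| ≥ ε)` by `E T_q / δ → 0`.
-/

noncomputable def meanVec {m d : ℕ} (v : Fin m → Fin d → ℝ) (i : Fin d) : ℝ :=
  (m : ℝ)⁻¹ * ∑ j, v j i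

noncomputable def meanSqNorm {m d : ℕ} (v : Fin m → Fin d → ℝ) : ℝ :=
  (m : ℝ)⁻¹ * ∑ j, ∑ i, v j i ^ 2

section Stability

variable {m d : ℕ}

theorem Vstat_eq (v : Fin m → Fin d → ℝ) :
    Vstat v = 1 - (∑ i, meanVec v i ^ 2) / meanSqNorm v :=
  rfl

theorem sum_sq_meanVec_le_meanSqNorm (w : Fin m → Fin d → ℝ) :
    ∑ i, meanVec w i ^ 2 ≤ meanSqNorm w := by
  rw [meanSqNorm, Finset.sum_comm, Finset.mul_sum]
  refine Finset.sum_le_sum fun i _ => ?_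
  simpa [meanVec, inv_mul_eq_div] using
    sum_div_card_sq_le_sum_sq_div_card (s := Finset.univ) (f := fun j => w j i)

theorem meanVec_const_add (hm : m ≠ 0) (β : Fin d → ℝ) (w : Fin m → Fin d → ℝ) (i : Fin d) :
    meanVec (fun j i => β i + w j i) i = β i + meanVec w i := by
  simp [meanVec, Finset.sum_add_distrib, mul_add, hm]

theorem meanSqNorm_const_add (hm : m ≠ 0) (β : Fin d → ℝ) (w : Fin m → Fin d → ℝ) :
    meanSqNorm (fun j i => β i + w j i)
      = ∑ i, β i ^ 2 + 2 * ∑ i, β i * meanVec w i + meanSqNorm w := by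
  simp only [meanSqNorm, meanVec, add_sq, Finset.sum_add_distrib, Finset.sum_const,
    Finset.card_univ, Fintype.card_fin, nsmul_eq_mul, mul_add, Finset.mul_sum]
  rw [Finset.sum_comm (f := fun j i => (m : ℝ)⁻¹ * (2 * β i * w j i))]
  congr 1
  congr 1
  · exact Finset.sum_congr rfl fun i _ => by field_simp
  · exact Finset.sum_congr rfl fun i _ => Finset.sum_congr rfl fun j _ => by ring

/-- Writing `B = ‖β‖²`, `P = ⟪β, w̄⟫` and `T` for the mean squared norm of the `w j`,
`𝒱(β + w) = (T - ‖w̄‖²) / (B + 2P + T)`; the numerator lies in `[0, T]` and, by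
Cauchy–Schwarz, `|P| ≤ √(B T) ≤ B / 4` once `T ≤ B / 16`. -/
theorem abs_Vstat_const_add_le (hm : m ≠ 0) {β : Fin d → ℝ} (hβ : 0 < ∑ i, β i ^ 2)
    {w : Fin m → Fin d → ℝ} (hw : meanSqNorm w ≤ (∑ i, β i ^ 2) / 16) :
    |Vstat (fun j i => β i + w j i)| ≤ 2 * meanSqNorm w / ∑ i, β i ^ 2 := by
  set B := ∑ i, β i ^ 2
  set P := ∑ i, β i * meanVec w i
  set Q := ∑ i, meanVec w i ^ 2
  set T := meanSqNorm w
  have hQT : Q ≤ T := sum_sq_meanVec_le_meanSqNorm w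
  have hQ : 0 ≤ Q := Finset.sum_nonneg fun i _ => sq_nonneg _
  have hP : P ^ 2 ≤ B * Q := Finset.sum_mul_sq_le_sq_mul_sq _ _ _
  have hden : B / 2 ≤ B + 2 * P + T := by nlinarith [sq_nonneg (4 * P + B)]
  have hnum : ∑ i, meanVec (fun j i => β i + w j i) i ^ 2 = B + 2 * P + Q := by
    simp only [meanVec_const_add hm, add_sq, Finset.sum_add_distrib, B, P, Q, Finset.mul_sum,
      mul_assoc]
  rw [Vstat_eq, hnum, meanSqNorm_const_add hm, one_sub_div (by linarith), add_sub_add_left_eq_sub,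
    abs_of_nonneg (div_nonneg (by linarith) (by linarith)), div_le_div_iff₀ (by linarith) hβ]
  nlinarith

theorem meanSqNorm_nonneg (v : Fin m → Fin d → ℝ) : 0 ≤ meanSqNorm v := by
  unfold meanSqNorm
  positivity

theorem le_meanSqNorm_of_le_abs_Vstat (hm : m ≠ 0) {β : Fin d → ℝ}
    (hβ : 0 < ∑ i, β i ^ 2) {w : Fin m → Fin d → ℝ} {ε : ℝ}
    (hε : ε ≤ |Vstat (fun j i => β i + w j i)|) :
    min ((∑ i, β i ^ 2) / 16) (ε * (∑ i, β i ^ 2) / 2) ≤ meanSqNorm w := by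
  by_contra! h
  have hV := abs_Vstat_const_add_le hm hβ (lt_min_iff.1 h).1.le
  rw [le_div_iff₀ hβ] at hV
  linarith [mul_le_mul_of_nonneg_right hε hβ.le, (lt_min_iff.1 h).2]

end Stability

theorem trace_transpose_mul_self_eq_sum_sq {ι κ : Type*} [Fintype ι] [Fintype κ]
    (A : Matrix ι κ ℝ) : (Aᵀ * A).trace = ∑ i, ∑ k, A i k ^ 2 := by
  simp only [trace, diag, mul_apply, transpose_apply, sq]
  exact Finset.sum_comm

theorem integral_le_sqrt_integral_sq {Ω : Type*} [MeasurableSpace Ω] {μ : Measure Ω}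
    [IsProbabilityMeasure μ] {f : Ω → ℝ} (hf : AEStronglyMeasurable f μ)
    (hf2 : Integrable (fun x => f x ^ 2) μ) :
    ∫ x, f x ∂μ ≤ √(∫ x, f x ^ 2 ∂μ) := by
  have hvar := ProbabilityTheory.variance_eq_sub ((memLp_two_iff_integrable_sq hf).2 hf2)
  have := ProbabilityTheory.variance_nonneg f μ
  refine (le_abs_self _).trans (Real.abs_le_sqrt ?_)
  simp only [Pi.pow_apply] at hvar
  linarith

theorem measure_le_ofReal_integral_div {Ω : Type*} [MeasurableSpace Ω] {μ : Measure Ω}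
    [IsFiniteMeasure μ] {f : Ω → ℝ} (hf0 : ∀ x, 0 ≤ f x) (hf : Integrable f μ) {δ : ℝ}
    (hδ : 0 < δ) : μ {x | δ ≤ f x} ≤ ENNReal.ofReal ((∫ x, f x ∂μ) / δ) := by
  rw [← ofReal_measureReal]
  refine ENNReal.ofReal_le_ofReal ((le_div_iff₀ hδ).2 ?_)
  rw [mul_comm]
  exact mul_meas_ge_le_integral_of_nonneg (ae_of_all _ hf0) hf δ

section SphericalSymmetry

variable {q : ℕ} {μ : Measure (Fin q → ℝ)}

theorem aestronglyMeasurable_sum_sq :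
    AEStronglyMeasurable (fun x : Fin q → ℝ => ∑ i, x i ^ 2) μ :=
  (continuous_finsetSum _ fun i _ => (continuous_apply i).pow 2).aestronglyMeasurable

theorem integrable_sum_sq [IsFiniteMeasure μ]
    (h : Integrable (fun x => (∑ i, x i ^ 2) ^ 2) μ) : Integrable (fun x => ∑ i, x i ^ 2) μ :=
  ((memLp_two_iff_integrable_sq aestronglyMeasurable_sum_sq).2 h).integrable one_le_two

theorem integrable_dotProduct_sq (hμ : Integrable (fun x => ∑ k, x k ^ 2) μ)
    (c : Fin q → ℝ) : Integrable (fun x => (c ⬝ᵥ x) ^ 2) μ := by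
  refine (hμ.const_mul (∑ k, c k ^ 2)).mono' (by fun_prop) (ae_of_all _ fun x => ?_)
  rw [Real.norm_eq_abs, abs_of_nonneg (sq_nonneg _)]
  exact Finset.sum_mul_sq_le_sq_mul_sq _ _ _

theorem integrable_apply_sq (hμ : Integrable (fun x => ∑ k, x k ^ 2) μ) (i : Fin q) :
    Integrable (fun x => x i ^ 2) μ := by
  simpa using integrable_dotProduct_sq hμ (Pi.single i 1)

theorem integrable_sum_sq_mulVec {ι : Type*} [Fintype ι]
    (hμ : Integrable (fun x => ∑ k, x k ^ 2) μ) (A : Matrix ι (Fin q) ℝ) :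
    Integrable (fun x => ∑ i, (A *ᵥ x) i ^ 2) μ :=
  integrable_finsetSum _ fun i _ => integrable_dotProduct_sq hμ (A i)

theorem integrable_meanSqNorm_mulVec {m d : ℕ} (hμ : Integrable (fun x => ∑ k, x k ^ 2) μ)
    (C : Fin m → Matrix (Fin d) (Fin q) ℝ) :
    Integrable (fun x => meanSqNorm fun j => C j *ᵥ x) μ :=
  (integrable_finsetSum _ fun j _ => integrable_sum_sq_mulVec hμ (C j)).const_mul _

theorem SphericallySymmetric.integral_dotProduct_sq (hs : SphericallySymmetric μ)
    {e : Fin q → ℝ} (he : ∑ k, e k ^ 2 = 1) (i : Fin q) :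
    ∫ x, (e ⬝ᵥ x) ^ 2 ∂μ = ∫ x, x i ^ 2 ∂μ := by
  have h := congrArg (fun ν => ∫ t, t ^ 2 ∂ν) (hs e he i)
  rwa [integral_map (by fun_prop) (by fun_prop),
    integral_map (measurable_pi_apply i).aemeasurable (by fun_prop)] at h

/-- Normalize `c` to a unit vector `e`; then each of the `q` coordinates has the law of
`⟪e, x⟫`. -/
theorem SphericallySymmetric.card_mul_integral_dotProduct_sq (hs : SphericallySymmetric μ)
    (hμ : Integrable (fun x => ∑ k, x k ^ 2) μ) (c : Fin q → ℝ) :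
    q * ∫ x, (c ⬝ᵥ x) ^ 2 ∂μ = (∑ k, c k ^ 2) * ∫ x, ∑ k, x k ^ 2 ∂μ := by
  rcases eq_or_ne c 0 with rfl | hc
  · simp
  have hpos : 0 < ∑ k, c k ^ 2 := by
    obtain ⟨k, hk⟩ := Function.ne_iff.mp hc
    exact Finset.sum_pos' (fun k _ => sq_nonneg _) ⟨k, Finset.mem_univ k, sq_pos_of_ne_zero hk⟩
  set r := √(∑ k, c k ^ 2)
  have hr : r ^ 2 = ∑ k, c k ^ 2 := Real.sq_sqrt hpos.le
  have hr0 : r ≠ 0 := (Real.sqrt_pos.2 hpos).ne'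
  set e : Fin q → ℝ := r⁻¹ • c
  have he : ∑ k, e k ^ 2 = 1 := by
    simp only [e, Pi.smul_apply, smul_eq_mul, mul_pow, ← Finset.mul_sum, ← hr, inv_pow]
    exact inv_mul_cancel₀ (pow_ne_zero 2 hr0)
  have hce : ∀ x, (c ⬝ᵥ x) ^ 2 = r ^ 2 * (e ⬝ᵥ x) ^ 2 := fun x => by
    rw [← mul_pow, ← smul_eq_mul, ← smul_dotProduct, smul_inv_smul₀ hr0]
  simp only [hce, integral_const_mul, integral_finsetSum _ fun i _ => integrable_apply_sq hμ i,
    ← hs.integral_dotProduct_sq he, Finset.sum_const, Finset.card_univ, Fintype.card_fin,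
    nsmul_eq_mul, ← hr]
  ring

theorem SphericallySymmetric.card_mul_integral_sum_sq_mulVec {ι : Type*} [Fintype ι]
    (hs : SphericallySymmetric μ) (hμ : Integrable (fun x => ∑ k, x k ^ 2) μ)
    (A : Matrix ι (Fin q) ℝ) :
    q * ∫ x, ∑ i, (A *ᵥ x) i ^ 2 ∂μ = (Aᵀ * A).trace * ∫ x, ∑ k, x k ^ 2 ∂μ := by
  simp only [mulVec, integral_finsetSum _ fun i _ => integrable_dotProduct_sq hμ (A i),
    Finset.mul_sum, hs.card_mul_integral_dotProduct_sq hμ, trace_transpose_mul_self_eq_sum_sq,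
    Finset.sum_mul]

theorem SphericallySymmetric.integral_meanSqNorm_mulVec {m d : ℕ} (hs : SphericallySymmetric μ)
    (hμ : Integrable (fun x => ∑ k, x k ^ 2) μ) (hq : q ≠ 0)
    (C : Fin m → Matrix (Fin d) (Fin q) ℝ) :
    ∫ x, meanSqNorm (fun j => C j *ᵥ x) ∂μ
      = (∑ j, ((C j)ᵀ * C j).trace) / (m * q) * ∫ x, ∑ k, x k ^ 2 ∂μ := by
  have hC (j : Fin m) : ∫ x, ∑ i, (C j *ᵥ x) i ^ 2 ∂μ
      = ((C j)ᵀ * C j).trace * (∫ x, ∑ k, x k ^ 2 ∂μ) / q := by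
    rw [eq_div_iff (Nat.cast_ne_zero.2 hq), mul_comm]
    exact hs.card_mul_integral_sum_sq_mulVec hμ (C j)
  simp only [meanSqNorm]
  rw [integral_const_mul, integral_finsetSum _ fun j _ => integrable_sum_sq_mulVec hμ (C j)]
  simp only [hC, ← Finset.sum_div, ← Finset.sum_mul]
  ring

end SphericalSymmetry

theorem tendsto_integral_sum_sq {μ : (q : ℕ) → Measure (Fin q → ℝ)}
    (hprob : ∀ q, IsProbabilityMeasure (μ q)) {c : ℝ}
    (hint : ∀ q, 1 ≤ q → Integrable (fun x => (∑ i, x i ^ 2) ^ 2) (μ q))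
    (hmom : ∀ q, 1 ≤ q → ∫ x, (∑ i, x i ^ 2) ^ 2 ∂(μ q) ≤ c / q ^ 2) :
    Tendsto (fun q => ∫ x, ∑ i, x i ^ 2 ∂(μ q)) atTop (nhds 0) := by
  have hlim : Tendsto (fun q : ℕ => √(c / (q : ℝ) ^ 2)) atTop (nhds 0) := by
    simpa using (tendsto_const_div_pow c 2 two_ne_zero).sqrt
  refine tendsto_of_tendsto_of_tendsto_of_le_of_le' tendsto_const_nhds hlim
    (Eventually.of_forall fun q => integral_nonneg fun x => by positivity) ?_
  filter_upwards [eventually_ge_atTop 1] with q hq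
  exact (integral_le_sqrt_integral_sq aestronglyMeasurable_sum_sq (hint q hq)).trans
    (Real.sqrt_le_sqrt (hmom q hq))

theorem stmt_7_general (m d : ℕ) (hm : 2 ≤ m)
    (ργ K : ℝ) (β : Fin d → ℝ) (hβ : β ≠ 0)
    (μ : (q : ℕ) → Measure (Fin q → ℝ)) (hprob : ∀ q, IsProbabilityMeasure (μ q))
    (hsph : ∀ q, 1 ≤ q → SphericallySymmetric (μ q))
    (hint : ∀ q, 1 ≤ q → Integrable (fun x => (∑ i, x i ^ 2) ^ 2) (μ q))
    (hmom : ∀ q, 1 ≤ q → ∫ x, (∑ i, x i ^ 2) ^ 2 ∂(μ q) ≤ K * ργ ^ 4 / q ^ 2)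
    (C : (q : ℕ) → Fin m → Matrix (Fin d) (Fin q) ℝ)
    (htr : Tendsto (fun q : ℕ =>
      (∑ j, ((C q j)ᵀ * C q j).trace) / (m * q)) atTop (nhds 0)) :
    ∀ ε > (0 : ℝ), Tendsto (fun q : ℕ =>
      μ q {x | ε ≤ |Vstat (fun j i => β i + (C q j *ᵥ x) i)|}) atTop (nhds 0) := by
  intro ε hε
  have hm0 : m ≠ 0 := by omega
  have hB : 0 < ∑ i, β i ^ 2 := by
    obtain ⟨i, hi⟩ := Function.ne_iff.mp hβ
    exact Finset.sum_pos' (fun i _ => sq_nonneg _) ⟨i, Finset.mem_univ i, sq_pos_of_ne_zero hi⟩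
  set δ := min ((∑ i, β i ^ 2) / 16) (ε * (∑ i, β i ^ 2) / 2)
  have hδ : 0 < δ := lt_min (by positivity) (by positivity)
  have hbound : ∀ᶠ q in atTop, μ q {x | ε ≤ |Vstat (fun j i => β i + (C q j *ᵥ x) i)|}
      ≤ ENNReal.ofReal ((∑ j, ((C q j)ᵀ * C q j).trace) / (m * q)
          * (∫ x, ∑ k, x k ^ 2 ∂(μ q)) / δ) := by
    filter_upwards [eventually_ge_atTop 1] with q hq
    have hg := integrable_sum_sq (hint q hq)
    calc _ ≤ μ q {x | δ ≤ meanSqNorm fun j => C q j *ᵥ x} :=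
          measure_mono fun x hx => le_meanSqNorm_of_le_abs_Vstat hm0 hB hx
      _ ≤ _ := measure_le_ofReal_integral_div (fun x => meanSqNorm_nonneg _)
          (integrable_meanSqNorm_mulVec hg (C q)) hδ
      _ = _ := by rw [(hsph q hq).integral_meanSqNorm_mulVec hg (by omega)]
  have hlim := ENNReal.tendsto_ofReal
    ((htr.mul (tendsto_integral_sum_sq hprob hint hmom)).div_const δ)
  rw [zero_mul, zero_div, ENNReal.ofReal_zero] at hlim
  exact tendsto_of_tendsto_of_tendsto_of_le_of_le' tendsto_const_nhds hlim
    (Eventually.of_forall fun _ => zero_le) hbound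

/-- alternative case `β ≠ 0`.  For spherically symmetric `γ⁽q⁾` with
`E‖γ⁽q⁾‖⁴ ≤ K ρ_γ⁴/q²` and matrices `C⁽q⁾(S_j)` with
`(1/(mq)) ∑_j tr(C⁽q⁾(S_j)ᵀ C⁽q⁾(S_j)) → 0`, the stability statistic of the regression
coefficients `β̂⁽q⁾(S_j) = β + C⁽q⁾(S_j) γ⁽q⁾` converges in probability to `0` as `q → ∞`. -/
theorem stmt_7 (m d : ℕ) (hm : 2 ≤ m) (hd : 1 ≤ d)
    (ργ K : ℝ) (hργ : 0 < ργ) (hK : 0 < K) (β : Fin d → ℝ) (hβ : β ≠ 0)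
    (μ : (q : ℕ) → Measure (Fin q → ℝ)) (hprob : ∀ q, IsProbabilityMeasure (μ q))
    (hsph : ∀ q, 1 ≤ q → SphericallySymmetric (μ q))
    (hint : ∀ q, 1 ≤ q → Integrable (fun x => (∑ i, x i ^ 2) ^ 2) (μ q))
    (hmom : ∀ q, 1 ≤ q → ∫ x, (∑ i, x i ^ 2) ^ 2 ∂(μ q) ≤ K * ργ ^ 4 / q ^ 2)
    (C : (q : ℕ) → Fin m → Matrix (Fin d) (Fin q) ℝ)
    (htr : Tendsto (fun q : ℕ =>
      (∑ j, ((C q j)ᵀ * C q j).trace) / (m * q)) atTop (nhds 0)) :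
    ∀ ε > (0 : ℝ), Tendsto (fun q : ℕ =>
      μ q {x | ε ≤ |Vstat (fun j i => β i + (C q j *ᵥ x) i)|}) atTop (nhds 0) :=
  stmt_7_general m d hm ργ K β hβ μ hprob hsph hint hmom C htr
end

section
/- Fix m ≥ 2, d ≥ 1, q ≥ 1, K > 0, and matrices C(S_1),…,C(S_m) ∈ ℝ^{d×q}. For each n, let β_n ∈ ℝ^d with β_n ≠ 0, let ρ_n > 0, let γ^{(n)} be a spherically symmetric random vector on ℝ^q with E‖γ^{(n)}‖⁴ ≤ K ρ_n⁴ / q², and set β̂_j^{(n)} = β_n + C(S_j) γ^{(n)} for j = 1,…,m. If ρ_n / ‖β_n‖ → 0 as n → ∞, then E[𝒱(β̂_1^{(n)},…,β̂_m^{(n)})] → 0 as n → ∞. -/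
/-!
Write `v_j = β + C_j γ`, let `D` be the mean of the `‖v_j‖²` and `N = ‖v̄‖²`, so that
`𝒱 = (D - N) / D`. The numerator is the spread of the `v_j` around their mean, hence at most their
mean squared distance to `β`, which is `≤ c ‖γ‖²` with `c = ∑_j ‖C_j‖_F²`. As
`‖v_j‖² ≥ ‖β‖² / 2 - c ‖γ‖²`, this gives `𝒱 ≤ 4 c ‖γ‖² / ‖β‖²` (for free when the right side
exceeds `1`, since `𝒱 ≤ 1`). Taking expectations and `E‖γ‖² ≤ (E‖γ‖⁴)^{1/2} ≤ √K ρ² / q` yields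
`E 𝒱 ≤ 4 c √K / q · (ρ / ‖β‖)² → 0`.
-/

open MeasureTheory Matrix Filter

lemma sq_mean_le_mean_sq {m : ℕ} (x : Fin m → ℝ) :
    ((m : ℝ)⁻¹ * ∑ j, x j) ^ 2 ≤ (m : ℝ)⁻¹ * ∑ j, x j ^ 2 := by
  simpa [inv_mul_eq_div] using
    sum_div_card_sq_le_sum_sq_div_card (s := Finset.univ) (f := x)

lemma mean_sq_sub_sq_mean_le {m : ℕ} (x : Fin m → ℝ) (a : ℝ) :
    (m : ℝ)⁻¹ * ∑ j, x j ^ 2 - ((m : ℝ)⁻¹ * ∑ j, x j) ^ 2 ≤ (m : ℝ)⁻¹ * ∑ j, (x j - a) ^ 2 := by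
  rcases Nat.eq_zero_or_pos m with rfl | hpos
  · simp
  have hm : (m : ℝ) ≠ 0 := Nat.cast_ne_zero.2 hpos.ne'
  have expand : (m : ℝ)⁻¹ * ∑ j, (x j - a) ^ 2 =
      (m : ℝ)⁻¹ * ∑ j, x j ^ 2 - 2 * a * ((m : ℝ)⁻¹ * ∑ j, x j) + a ^ 2 := by
    simp only [sub_sq, Finset.sum_add_distrib, Finset.sum_sub_distrib, ← Finset.sum_mul,
      ← Finset.mul_sum, Finset.sum_const, Finset.card_univ, Fintype.card_fin, nsmul_eq_mul]
    field_simp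
  rw [expand]
  nlinarith [sq_nonneg ((m : ℝ)⁻¹ * ∑ j, x j - a)]

lemma Vstat_nonneg {m d : ℕ} (v : Fin m → Fin d → ℝ) : 0 ≤ Vstat v := by
  have hle : ∑ i, ((m : ℝ)⁻¹ * ∑ j, v j i) ^ 2 ≤ (m : ℝ)⁻¹ * ∑ j, ∑ i, v j i ^ 2 := by
    rw [Finset.sum_comm, Finset.mul_sum]
    exact Finset.sum_le_sum fun i _ => sq_mean_le_mean_sq (v · i)
  rw [Vstat, sub_nonneg]
  exact div_le_one_of_le₀ hle (by positivity)

lemma Vstat_le_one {m d : ℕ} (v : Fin m → Fin d → ℝ) : Vstat v ≤ 1 := by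
  rw [Vstat, sub_le_self_iff]
  positivity

lemma sum_sq_pos_of_ne_zero {ι : Type*} [Fintype ι] {v : ι → ℝ} (hv : v ≠ 0) :
    0 < ∑ i, v i ^ 2 := by
  obtain ⟨i, hi⟩ := Function.ne_iff.1 hv
  exact Finset.sum_pos' (fun _ _ => sq_nonneg _) ⟨i, Finset.mem_univ _, sq_pos_of_ne_zero hi⟩

lemma Vstat_add_le {m d : ℕ} (hm : 0 < m) (b : Fin d → ℝ) (hb : 0 < ∑ i, b i ^ 2)
    (w : Fin m → Fin d → ℝ) (c : ℝ) (hw : ∀ j, ∑ i, w j i ^ 2 ≤ c) :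
    Vstat (fun j i => b i + w j i) ≤ 4 * c / ∑ i, b i ^ 2 := by
  have hc : 0 ≤ c := (by positivity : (0 : ℝ) ≤ _).trans (hw ⟨0, hm⟩)
  have mean_const : ∀ a : ℝ, (m : ℝ)⁻¹ * ∑ _j : Fin m, a = a := by simp [hm.ne']
  have mean_le : ∀ f : Fin m → ℝ, (∀ j, f j ≤ c) → (m : ℝ)⁻¹ * ∑ j, f j ≤ c := fun f hf =>
    calc (m : ℝ)⁻¹ * ∑ j, f j ≤ (m : ℝ)⁻¹ * ∑ _j : Fin m, c := by gcongr with j; exact hf j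
      _ = c := mean_const c
  set S := ∑ i, b i ^ 2
  set N := ∑ i, ((m : ℝ)⁻¹ * ∑ j, (b i + w j i)) ^ 2
  set D := (m : ℝ)⁻¹ * ∑ j, ∑ i, (b i + w j i) ^ 2 with hD
  have spread : D - N ≤ c := by
    have hD' : D = ∑ i, (m : ℝ)⁻¹ * ∑ j, (b i + w j i) ^ 2 := by
      rw [hD, Finset.sum_comm, Finset.mul_sum]
    have hw' : ∑ i, (m : ℝ)⁻¹ * ∑ j, w j i ^ 2 = (m : ℝ)⁻¹ * ∑ j, ∑ i, w j i ^ 2 := by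
      rw [Finset.sum_comm, Finset.mul_sum]
    calc D - N = ∑ i, ((m : ℝ)⁻¹ * ∑ j, (b i + w j i) ^ 2
            - ((m : ℝ)⁻¹ * ∑ j, (b i + w j i)) ^ 2) := by rw [hD', Finset.sum_sub_distrib]
      _ ≤ ∑ i, (m : ℝ)⁻¹ * ∑ j, w j i ^ 2 := Finset.sum_le_sum fun i _ => by
          simpa using mean_sq_sub_sq_mean_le (fun j => b i + w j i) (b i)
      _ ≤ c := hw' ▸ mean_le _ hw
  have size : S / 2 - c ≤ D := by
    have hj : ∀ j, S / 2 - ∑ i, w j i ^ 2 ≤ ∑ i, (b i + w j i) ^ 2 := fun j => by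
      rw [div_eq_mul_inv, Finset.sum_mul, ← Finset.sum_sub_distrib]
      exact Finset.sum_le_sum fun i _ => by nlinarith [sq_nonneg (b i + 2 * w j i)]
    have := mean_le (fun j => S / 2 - ∑ i, (b i + w j i) ^ 2) fun j => by linarith [hj j, hw j]
    rw [Finset.sum_sub_distrib, mul_sub, mean_const] at this
    linarith
  rcases le_or_gt S (4 * c) with hbig | hsmall
  · exact (Vstat_le_one _).trans ((one_le_div hb).2 hbig)
  · have hDpos : S / 4 ≤ D := by linarith
    calc Vstat (fun j i => b i + w j i) = (D - N) / D := by
          rw [Vstat, one_sub_div (by linarith : 0 < D).ne']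
      _ ≤ c / (S / 4) := by gcongr
      _ = 4 * c / S := by ring

lemma sum_mulVec_sq_le {d q : ℕ} (M : Matrix (Fin d) (Fin q) ℝ) (x : Fin q → ℝ) :
    ∑ i, (M *ᵥ x) i ^ 2 ≤ (∑ i, ∑ k, M i k ^ 2) * ∑ k, x k ^ 2 := by
  rw [Finset.sum_mul]
  exact Finset.sum_le_sum fun i _ => Finset.sum_mul_sq_le_sq_mul_sq Finset.univ (M i) x

lemma sq_integral_le_integral_sq {Ω : Type*} [MeasurableSpace Ω] {μ : Measure Ω}
    [IsProbabilityMeasure μ] {f : Ω → ℝ} (hf : AEStronglyMeasurable f μ)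
    (hf2 : Integrable (fun ω => f ω ^ 2) μ) :
    (∫ ω, f ω ∂μ) ^ 2 ≤ ∫ ω, f ω ^ 2 ∂μ := by
  have := ProbabilityTheory.variance_nonneg f μ
  rw [ProbabilityTheory.variance_eq_sub ((memLp_two_iff_integrable_sq hf).2 hf2)] at this
  simpa [sub_nonneg] using this

lemma integral_Vstat_add_mulVec_le {m d q : ℕ} (hm : 0 < m) (b : Fin d → ℝ)
    (hb : 0 < ∑ i, b i ^ 2) (C : Fin m → Matrix (Fin d) (Fin q) ℝ) (μ : Measure (Fin q → ℝ))
    [IsProbabilityMeasure μ] (hint : Integrable (fun x => (∑ i, x i ^ 2) ^ 2) μ) :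
    ∫ x, Vstat (fun j i => b i + (C j *ᵥ x) i) ∂μ ≤
      4 * (∑ j, ∑ i, ∑ k, C j i k ^ 2) * √(∫ x, (∑ i, x i ^ 2) ^ 2 ∂μ) / ∑ i, b i ^ 2 := by
  set c := ∑ j, ∑ i, ∑ k, C j i k ^ 2
  set X : (Fin q → ℝ) → ℝ := fun x => ∑ i, x i ^ 2
  have hXm : AEStronglyMeasurable X μ := by fun_prop
  have hXint : Integrable X μ := ((memLp_two_iff_integrable_sq hXm).2 hint).integrable one_le_two
  have hpt : ∀ x, Vstat (fun j i => b i + (C j *ᵥ x) i) ≤ 4 * c / (∑ i, b i ^ 2) * X x := by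
    intro x
    have hC : ∀ j, ∑ i, (C j *ᵥ x) i ^ 2 ≤ c * X x := fun j =>
      (sum_mulVec_sq_le (C j) x).trans <| by
        gcongr
        exact Finset.single_le_sum (f := fun j => ∑ i, ∑ k, C j i k ^ 2)
          (fun _ _ => by positivity) (Finset.mem_univ j)
    calc _ ≤ 4 * (c * X x) / ∑ i, b i ^ 2 := Vstat_add_le hm b hb _ _ hC
      _ = _ := by ring
  calc ∫ x, Vstat (fun j i => b i + (C j *ᵥ x) i) ∂μ
      ≤ ∫ x, 4 * c / (∑ i, b i ^ 2) * X x ∂μ :=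
        integral_mono_of_nonneg (ae_of_all _ fun _ => Vstat_nonneg _) (hXint.const_mul _)
          (ae_of_all _ hpt)
    _ = 4 * c / (∑ i, b i ^ 2) * ∫ x, X x ∂μ := integral_const_mul _ _
    _ ≤ 4 * c / (∑ i, b i ^ 2) * √(∫ x, X x ^ 2 ∂μ) := by
        gcongr
        exact Real.le_sqrt_of_sq_le (sq_integral_le_integral_sq hXm hint)
    _ = _ := by ring

theorem stmt_10_general (m d q : ℕ) (hm : 2 ≤ m)
    (K : ℝ) (C : Fin m → Matrix (Fin d) (Fin q) ℝ)
    (β : ℕ → Fin d → ℝ) (hβ : ∀ n, β n ≠ 0)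
    (ρ : ℕ → ℝ)
    (μ : ℕ → Measure (Fin q → ℝ)) (hprob : ∀ n, IsProbabilityMeasure (μ n))
    (hint : ∀ n, Integrable (fun x => (∑ i, x i ^ 2) ^ 2) (μ n))
    (hmom : ∀ n, ∫ x, (∑ i, x i ^ 2) ^ 2 ∂(μ n) ≤ K * ρ n ^ 4 / q ^ 2)
    (hratio : Tendsto (fun n => ρ n / Real.sqrt (∑ i, β n i ^ 2)) atTop (nhds 0)) :
    Tendsto (fun n => ∫ x, Vstat (fun j i => β n i + (C j *ᵥ x) i) ∂(μ n))
      atTop (nhds 0) := by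
  set c := ∑ j, ∑ i, ∑ k, C j i k ^ 2
  have bound : ∀ n, ∫ x, Vstat (fun j i => β n i + (C j *ᵥ x) i) ∂(μ n) ≤
      4 * c * √(K / q ^ 2) * (ρ n / √(∑ i, β n i ^ 2)) ^ 2 := fun n => by
    have hS := sum_sq_pos_of_ne_zero (hβ n)
    calc _ ≤ 4 * c * √(∫ x, (∑ i, x i ^ 2) ^ 2 ∂(μ n)) / ∑ i, β n i ^ 2 :=
          integral_Vstat_add_mulVec_le (by omega) _ hS C (μ n) (hint n)
      _ ≤ 4 * c * √(K / q ^ 2 * (ρ n ^ 2) ^ 2) / ∑ i, β n i ^ 2 := by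
          gcongr
          exact (hmom n).trans_eq (by ring)
      _ = _ := by
          rw [div_pow, Real.sq_sqrt hS.le, Real.sqrt_mul' _ (by positivity),
            Real.sqrt_sq (by positivity)]
          ring
  exact squeeze_zero (fun n => integral_nonneg fun _ => Vstat_nonneg _) bound
    (by simpa only [zero_pow two_ne_zero, mul_zero] using
      (hratio.pow 2).const_mul (4 * c * √(K / q ^ 2)))

/-- with `β̂_j⁽ⁿ⁾ = β_n + C(S_j) γ⁽ⁿ⁾`, `γ⁽ⁿ⁾` spherically symmetric with
`E‖γ⁽ⁿ⁾‖⁴ ≤ K ρ_n⁴/q²`, `β_n ≠ 0` and `ρ_n/‖β_n‖ → 0`,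
then `E[𝒱(β̂₁⁽ⁿ⁾, …, β̂_m⁽ⁿ⁾)] → 0` as `n → ∞`. -/
theorem stmt_10 (m d q : ℕ) (hm : 2 ≤ m) (hd : 1 ≤ d) (hq : 1 ≤ q)
    (K : ℝ) (hK : 0 < K) (C : Fin m → Matrix (Fin d) (Fin q) ℝ)
    (β : ℕ → Fin d → ℝ) (hβ : ∀ n, β n ≠ 0)
    (ρ : ℕ → ℝ) (hρ : ∀ n, 0 < ρ n)
    (μ : ℕ → Measure (Fin q → ℝ)) (hprob : ∀ n, IsProbabilityMeasure (μ n))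
    (hsph : ∀ n, SphericallySymmetric (μ n))
    (hint : ∀ n, Integrable (fun x => (∑ i, x i ^ 2) ^ 2) (μ n))
    (hmom : ∀ n, ∫ x, (∑ i, x i ^ 2) ^ 2 ∂(μ n) ≤ K * ρ n ^ 4 / q ^ 2)
    (hratio : Tendsto (fun n => ρ n / Real.sqrt (∑ i, β n i ^ 2)) atTop (nhds 0)) :
    Tendsto (fun n => ∫ x, Vstat (fun j i => β n i + (C j *ᵥ x) i) ∂(μ n))
      atTop (nhds 0) :=
  stmt_10_general m d q hm K C β hβ ρ μ hprob hint hmom hratio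
end
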